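/- Let 𝒮 = 𝒮(ℝ^d; ℂ^N); for h ∈ 𝒮 and b ∈ ℝ^d write h_b(x) := h(x − b). Let (W_n)_{n≥0} and (W_n^T)_{n≥1} be sequences of continuous n-linear functionals on 𝒮 (W_0 = 1) satisfying the truncation relation, and assume each W_n^T is translation invariant: W_n^T(f_{1,b}, …, f_{n,b}) = W_n^T(f_1, …, f_n) for all b ∈ ℝ^d. Fix a spacelike direction a ∈ ℝ^d ∖ {0} and suppose that for all n, m ≥ 1 and all f_1, …, f_n, h_1, …, h_m ∈ 𝒮: lim_{t→∞} W_{n+m}^T(f_1, …, f_n, h_{1,ta}, …, h_{m,ta}) = 0. Then the cluster property holds: for all n, m ≥ 0, lim_{t→∞} W_{n+m}(f_1, …, f_n, h_{1,ta}, …, h_{m,ta}) = W_n(f_1, …, f_n) · W_m(h_1, …, h_m). -/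

import Mathlib

open scoped BigOperators Topology

/-- The Schwartz space `𝒮(ℝ^d; ℂ^N)`. -/
abbrev Sch (d N : ℕ) : Type :=
  SchwartzMap (EuclideanSpace ℝ (Fin d)) (EuclideanSpace ℂ (Fin N))

variable {d N : ℕ}

/-- Block value for the truncation relation: the truncated functional of arity `s.card` applied
to the arguments indexed by `s` in increasing order. -/
noncomputable def blockEval
    (WT : (k : ℕ) → ContinuousMultilinearMap ℂ (fun _ : Fin k => Sch d N) ℂ)
    {n : ℕ} (f : Fin n → Sch d N) (s : Finset (Fin n)) : ℂ :=
  WT s.card (fun i : Fin s.card => f ((s.orderIsoOfFin rfl i : Fin n)))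

/-- The truncation relation: for all `n ≥ 1` and all `f_1, …, f_n`,
`W_n (f_1, …, f_n) = ∑_{I ∈ 𝒫⁽ⁿ⁾} ∏_{{j_1 < … < j_l} ∈ I} W_l^T (f_{j_1}, …, f_{j_l})`,
where `𝒫⁽ⁿ⁾` is the set of all partitions of `{1, …, n}` into disjoint nonempty subsets. -/
def TruncationRelation
    (W WT : (k : ℕ) → ContinuousMultilinearMap ℂ (fun _ : Fin k => Sch d N) ℂ) : Prop :=
  ∀ (n : ℕ), 1 ≤ n → ∀ (f : Fin n → Sch d N),
    W n f = ∑ I : Finpartition (Finset.univ : Finset (Fin n)),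
      ∏ s ∈ I.parts, blockEval WT f s

/-!
Expand `W_{n+m}(f, h_{ta})` by the truncation relation. A block of a partition of
`{1, …, n+m}` lying in the first `n` slots does not see the translation, one lying in the last `m`
slots sees it only through `W^T`, which is translation invariant, and a mixed block is a mixed
truncated function, which tends to `0`. In the limit only the partitions without mixed blocks
survive; these are exactly the pairs (partition of `{1, …, n}`, partition of `{n+1, …, n+m}`), so
the limit factorizes as `W_n(f) W_m(h)`. The cases `n = 0` or `m = 0` need no separate treatment
because `W_0 = 1` is the truncation relation for the empty set, whose only partition has no parts.
-/

open Finset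

theorem Fin.castAdd_ne_natAdd {n m : ℕ} (i : Fin n) (j : Fin m) :
    Fin.castAdd m i ≠ Fin.natAdd n j := by
  rw [Ne, Fin.ext_iff, Fin.val_castAdd, Fin.val_natAdd]
  omega

theorem Fin.strictMono_append {α : Type*} [Preorder α] {p q : ℕ} {x : Fin p → α}
    {y : Fin q → α} (hx : StrictMono x) (hy : StrictMono y) (hxy : ∀ i j, x i < y j) :
    StrictMono (Fin.append x y) := by
  intro i j hij
  induction i using Fin.addCases <;> induction j using Fin.addCases <;>
    simp only [Fin.append_left, Fin.append_right]
  · exact hx ((Fin.strictMono_castAdd _).lt_iff_lt.mp hij)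
  · exact hxy _ _
  · simp only [Fin.lt_def, Fin.val_natAdd, Fin.val_castAdd] at hij
    omega
  · exact hy ((Fin.natAdd_lt_natAdd_iff _).mp hij)

namespace Finpartition

variable {α β : Type*} [DecidableEq α] [DecidableEq β]

section DisjUnion

variable {u v : Finset α}

def disjUnion (P : Finpartition u) (Q : Finpartition v) (huv : Disjoint u v) :
    Finpartition (u ∪ v) where
  parts := P.parts ∪ Q.parts
  supIndep := by
    rw [supIndep_iff_pairwiseDisjoint, coe_union, Set.pairwiseDisjoint_union]
    exact ⟨P.disjoint, Q.disjoint, fun s hs t ht _ => huv.mono (P.le hs) (Q.le ht)⟩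
  sup_parts := by rw [sup_union, P.sup_parts, Q.sup_parts]; rfl
  bot_notMem := by simp

theorem filter_subset_left_disjUnion (P : Finpartition u) (Q : Finpartition v)
    (huv : Disjoint u v) : (P.disjUnion Q huv).parts.filter (· ⊆ u) = P.parts := by
  refine (filter_union _ _ _).trans ?_
  rw [filter_true_of_mem fun t => P.le, filter_false_of_mem, union_empty]
  exact fun t ht htu => Q.ne_bot ht (disjoint_self.mp (huv.mono htu (Q.le ht)))

theorem filter_subset_right_disjUnion (P : Finpartition u) (Q : Finpartition v)
    (huv : Disjoint u v) : (P.disjUnion Q huv).parts.filter (· ⊆ v) = Q.parts := by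
  refine (filter_union _ _ _).trans ?_
  rw [filter_true_of_mem fun t => Q.le, filter_false_of_mem, empty_union]
  exact fun t ht htv => P.ne_bot ht (disjoint_self.mp (huv.mono (P.le ht) htv))

theorem prod_disjUnion {R : Type*} [CommMonoid R] (P : Finpartition u) (Q : Finpartition v)
    (huv : Disjoint u v) (c : Finset α → R) :
    ∏ t ∈ (P.disjUnion Q huv).parts, c t = (∏ t ∈ P.parts, c t) * ∏ t ∈ Q.parts, c t := by
  refine prod_union (Finset.disjoint_left.mpr fun t htP htQ => ?_)
  exact P.ne_bot htP (disjoint_self.mp (huv.mono (P.le htP) (Q.le htQ)))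

theorem disjUnion_injective (huv : Disjoint u v) :
    Function.Injective fun PQ : Finpartition u × Finpartition v => PQ.1.disjUnion PQ.2 huv := by
  rintro ⟨P, Q⟩ ⟨P', Q'⟩ h
  have hparts := congrArg Finpartition.parts h
  refine Prod.ext (Finpartition.ext ?_) (Finpartition.ext ?_)
  · rw [← filter_subset_left_disjUnion P Q huv, ← filter_subset_left_disjUnion P' Q' huv]
    exact congrArg _ hparts
  · rw [← filter_subset_right_disjUnion P Q huv, ← filter_subset_right_disjUnion P' Q' huv]
    exact congrArg _ hparts

theorem eq_disjUnion_restrict (huv : Disjoint u v) (K : Finpartition (u ∪ v))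
    (hK : ∀ t ∈ K.parts, t ⊆ u ∨ t ⊆ v) :
    K = (K.restrict subset_union_left).disjUnion (K.restrict subset_union_right) huv := by
  ext t
  simp only [disjUnion, restrict, mem_union, mem_erase, mem_image]
  constructor
  · intro ht
    rcases hK t ht with htu | htv
    · exact .inl ⟨K.ne_bot ht, t, ht, inf_eq_left.mpr htu⟩
    · exact .inr ⟨K.ne_bot ht, t, ht, inf_eq_left.mpr htv⟩
  · rintro (⟨hne, s, hs, rfl⟩ | ⟨hne, s, hs, rfl⟩) <;> rcases hK s hs with hsu | hsv
    · rwa [inf_eq_left.mpr hsu]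
    · exact absurd (huv.symm.mono_left hsv).eq_bot hne
    · exact absurd (huv.mono_left hsu).eq_bot hne
    · rwa [inf_eq_left.mpr hsv]

theorem sum_prod_union_of_disjoint {R : Type*} [CommSemiring R] (huv : Disjoint u v)
    (c : Finset α → R) (hc : ∀ t, ¬t ⊆ u → ¬t ⊆ v → c t = 0) :
    ∑ K : Finpartition (u ∪ v), ∏ t ∈ K.parts, c t =
      (∑ P : Finpartition u, ∏ t ∈ P.parts, c t) * ∑ Q : Finpartition v, ∏ t ∈ Q.parts, c t := by
  rw [sum_mul_sum, ← Fintype.sum_prod_type']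
  symm
  refine sum_of_injOn _ (disjUnion_injective huv).injOn (fun _ _ => mem_coe.mpr (mem_univ _))
    ?_ fun PQ _ => (prod_disjUnion PQ.1 PQ.2 huv c).symm
  intro K _ hK
  obtain ⟨t, ht, hmixed⟩ : ∃ t ∈ K.parts, ¬(t ⊆ u ∨ t ⊆ v) := by
    by_contra! hsplit
    exact hK ⟨(_, _), mem_coe.mpr (mem_univ _), (eq_disjUnion_restrict huv K hsplit).symm⟩
  exact prod_eq_zero ht (hc t (fun h => hmixed (.inl h)) fun h => hmixed (.inr h))

end DisjUnion

section FinsetMap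

variable {s : Finset α}

def finsetMap (e : α ↪ β) (P : Finpartition s) : Finpartition (s.map e) where
  parts := P.parts.map (mapEmbedding e).toEmbedding
  supIndep := by
    rw [supIndep_iff_pairwiseDisjoint]
    intro _ ht _ ht' hne
    simp only [coe_map, Set.mem_image, mem_coe] at ht ht'
    obtain ⟨t, ht, rfl⟩ := ht
    obtain ⟨t', ht', rfl⟩ := ht'
    exact (disjoint_map e).mpr (P.disjoint ht ht' fun h => hne (h ▸ rfl))
  sup_parts := by
    ext x
    simp only [mem_sup, mem_map, RelEmbedding.coe_toEmbedding, mapEmbedding_apply, id_eq,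
      exists_exists_and_eq_and]
    constructor
    · rintro ⟨t, ht, a, ha, rfl⟩
      exact ⟨a, P.le ht ha, rfl⟩
    · rintro ⟨a, ha, rfl⟩
      obtain ⟨t, ht, hat⟩ := P.exists_mem ha
      exact ⟨t, ht, a, hat, rfl⟩
  bot_notMem := by simp

noncomputable def finsetComap (e : α ↪ β) (Q : Finpartition (s.map e)) : Finpartition s where
  parts := Q.parts.image fun t => t.preimage e e.injective.injOn
  supIndep := by
    rw [supIndep_iff_pairwiseDisjoint]
    intro _ ht _ ht' hne
    simp only [coe_image, Set.mem_image, mem_coe] at ht ht'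
    obtain ⟨t, ht, rfl⟩ := ht
    obtain ⟨t', ht', rfl⟩ := ht'
    exact disjoint_preimage (Q.disjoint ht ht' fun h => hne (h ▸ rfl))
  sup_parts := by
    ext x
    simp only [mem_sup, mem_image, id_eq, exists_exists_and_eq_and, mem_preimage]
    constructor
    · rintro ⟨t, ht, hx⟩
      exact (mem_map' e).mp (Q.le ht hx)
    · exact fun hx => Q.exists_mem (mem_map_of_mem e hx)
  bot_notMem := by
    simp only [bot_eq_empty, mem_image, not_exists, not_and]
    intro t ht hempty
    obtain ⟨y, hy⟩ := Q.nonempty_of_mem_parts ht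
    obtain ⟨x, -, rfl⟩ := mem_map.mp (Q.le ht hy)
    exact notMem_empty x (hempty ▸ mem_preimage.mpr hy)

theorem finsetComap_finsetMap (e : α ↪ β) (P : Finpartition s) :
    (P.finsetMap e).finsetComap e = P := by
  ext t
  simp [finsetComap, finsetMap, preimage_map]

theorem finsetMap_finsetComap (e : α ↪ β) (Q : Finpartition (s.map e)) :
    (Q.finsetComap e).finsetMap e = Q := by
  have hmap : ∀ t ∈ Q.parts, (t.preimage e e.injective.injOn).map e = t := by
    intro t ht
    obtain ⟨w, -, rfl⟩ := subset_map_iff.mp (Q.le ht)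
    rw [preimage_map]
  ext t
  simp only [finsetComap, finsetMap, mem_map, mem_image, RelEmbedding.coe_toEmbedding,
    mapEmbedding_apply, exists_exists_and_eq_and]
  constructor
  · rintro ⟨t, ht, rfl⟩
    rwa [hmap t ht]
  · exact fun ht => ⟨t, ht, hmap t ht⟩

theorem sum_prod_finsetMap {R : Type*} [CommSemiring R] (e : α ↪ β) (c : Finset β → R) :
    ∑ P : Finpartition s, ∏ t ∈ P.parts, c (t.map e) =
      ∑ Q : Finpartition (s.map e), ∏ t ∈ Q.parts, c t := by
  refine Fintype.sum_equiv ⟨finsetMap e, finsetComap e, finsetComap_finsetMap e,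
    finsetMap_finsetComap e⟩ _ _ fun P => ?_
  exact (prod_map P.parts (mapEmbedding e).toEmbedding c).symm

end FinsetMap

end Finpartition

namespace Finset

variable {n m : ℕ}

noncomputable def castAddPreimage (s : Finset (Fin (n + m))) : Finset (Fin n) :=
  s.preimage (Fin.castAdd m) (Fin.castAdd_injective n m).injOn

noncomputable def natAddPreimage (s : Finset (Fin (n + m))) : Finset (Fin m) :=
  s.preimage (Fin.natAdd n) (Fin.natAdd_injective m n).injOn

theorem castAddPreimage_eq_empty_iff {s : Finset (Fin (n + m))} :
    s.castAddPreimage = ∅ ↔ s ⊆ univ.map (Fin.natAddEmb n) := by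
  simp only [castAddPreimage, eq_empty_iff_forall_notMem, mem_preimage, subset_iff, mem_map,
    mem_univ, true_and, Fin.natAddEmb_apply]
  constructor
  · intro h x hx
    induction x using Fin.addCases with
    | left i => exact absurd hx (h i)
    | right j => exact ⟨j, rfl⟩
  · rintro h i hi
    obtain ⟨j, hj⟩ := h hi
    exact Fin.castAdd_ne_natAdd i j hj.symm

theorem natAddPreimage_eq_empty_iff {s : Finset (Fin (n + m))} :
    s.natAddPreimage = ∅ ↔ s ⊆ univ.map (Fin.castAddEmb m) := by
  simp only [natAddPreimage, eq_empty_iff_forall_notMem, mem_preimage, subset_iff, mem_map,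
    mem_univ, true_and, Fin.coe_castAddEmb]
  constructor
  · intro h x hx
    induction x using Fin.addCases with
    | left i => exact ⟨i, rfl⟩
    | right j => exact absurd hx (h j)
  · rintro h j hj
    obtain ⟨i, hi⟩ := h hj
    exact Fin.castAdd_ne_natAdd i j hi

theorem disjoint_map_castAdd_map_natAdd :
    Disjoint (univ.map (Fin.castAddEmb m)) (univ.map (Fin.natAddEmb n)) := by
  simp only [Finset.disjoint_left, mem_map, mem_univ, true_and, not_exists, forall_exists_index,
    forall_apply_eq_imp_iff, Fin.coe_castAddEmb, Fin.natAddEmb_apply]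
  exact fun i j h => Fin.castAdd_ne_natAdd i j h.symm

theorem map_castAdd_union_map_natAdd :
    univ.map (Fin.castAddEmb m) ∪ univ.map (Fin.natAddEmb n) = univ := by
  ext x
  induction x using Fin.addCases <;> simp

theorem card_castAddPreimage_add_card_natAddPreimage (s : Finset (Fin (n + m))) :
    #s.castAddPreimage + #s.natAddPreimage = #s := by
  classical
  rw [castAddPreimage, natAddPreimage, card_preimage, card_preimage,
    ← card_filter_add_card_filter_not (s := s) (p := (· ∈ Set.range (Fin.castAdd m)))]
  congr 1
  refine congrArg card (filter_congr fun x _ => ?_)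
  induction x using Fin.addCases <;> simp [Fin.castAdd_ne_natAdd, (Fin.castAdd_ne_natAdd _ _).symm]

theorem orderEmbOfFin_eq_append (s : Finset (Fin (n + m)))
    (h : #s = #s.castAddPreimage + #s.natAddPreimage) :
    ⇑(s.orderEmbOfFin h) =
      Fin.append (fun i => Fin.castAdd m (s.castAddPreimage.orderEmbOfFin rfl i))
        (fun j => Fin.natAdd n (s.natAddPreimage.orderEmbOfFin rfl j)) := by
  refine (orderEmbOfFin_unique h (fun i => ?_) (Fin.strictMono_append ?_ ?_ ?_)).symm
  · induction i using Fin.addCases <;> simp only [Fin.append_left, Fin.append_right]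
    · exact mem_preimage.mp (orderEmbOfFin_mem _ rfl _)
    · exact mem_preimage.mp (orderEmbOfFin_mem _ rfl _)
  · exact (Fin.strictMono_castAdd m).comp (OrderEmbedding.strictMono _)
  · exact (Fin.strictMono_natAdd n).comp (OrderEmbedding.strictMono _)
  · intro i j
    simp only [Fin.lt_def, Fin.val_natAdd, Fin.val_castAdd]
    omega

end Finset

open Filter

section BlockEval

variable (WT : (k : ℕ) → ContinuousMultilinearMap ℂ (fun _ : Fin k => Sch d N) ℂ)

theorem blockEval_eq_of_card_eq {n k : ℕ} (g : Fin n → Sch d N) (s : Finset (Fin n))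
    (h : #s = k) : blockEval WT g s = WT k (fun i => g (s.orderEmbOfFin h i)) := by
  subst h
  simp only [blockEval, coe_orderIsoOfFin_apply]

theorem blockEval_map {n k : ℕ} (e : Fin n ↪ Fin k) (he : StrictMono e) (g : Fin k → Sch d N)
    (s : Finset (Fin n)) : blockEval WT g (s.map e) = blockEval WT (g ∘ e) s := by
  rw [blockEval_eq_of_card_eq WT g _ (card_map _), blockEval_eq_of_card_eq WT _ s rfl]
  have : ⇑((s.map e).orderEmbOfFin (card_map _)) = e ∘ s.orderEmbOfFin rfl :=
    (orderEmbOfFin_unique _ (fun i => mem_map_of_mem _ (orderEmbOfFin_mem _ rfl i))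
      (he.comp (OrderEmbedding.strictMono _))).symm
  simp only [this, Function.comp_apply]

theorem blockEval_append {n m : ℕ} (f : Fin n → Sch d N) (g : Fin m → Sch d N)
    (s : Finset (Fin (n + m))) :
    blockEval WT (Fin.append f g) s = WT (#s.castAddPreimage + #s.natAddPreimage)
      (Fin.append (fun i => f (s.castAddPreimage.orderEmbOfFin rfl i))
        (fun j => g (s.natAddPreimage.orderEmbOfFin rfl j))) := by
  rw [blockEval_eq_of_card_eq WT _ s (card_castAddPreimage_add_card_natAddPreimage s).symm,
    orderEmbOfFin_eq_append]
  congr 1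
  funext i
  induction i using Fin.addCases <;> simp only [Fin.append_left, Fin.append_right]

noncomputable def blockLimit {n m : ℕ} (f : Fin n → Sch d N) (h : Fin m → Sch d N)
    (s : Finset (Fin (n + m))) : ℂ :=
  if s.castAddPreimage.Nonempty ∧ s.natAddPreimage.Nonempty then 0
  else blockEval WT (Fin.append f h) s

theorem tendsto_blockEval_append {ι : Type*} {l : Filter ι} (T : ι → Sch d N → Sch d N)
    (hT : ∀ k i (g : Fin k → Sch d N), WT k (fun j => T i (g j)) = WT k g)
    (hcl : ∀ p q, 1 ≤ p → 1 ≤ q → ∀ (F : Fin p → Sch d N) (H : Fin q → Sch d N),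
      Tendsto (fun i => WT (p + q) (Fin.append F fun j => T i (H j))) l (𝓝 0))
    {n m : ℕ} (f : Fin n → Sch d N) (h : Fin m → Sch d N) (s : Finset (Fin (n + m))) :
    Tendsto (fun i => blockEval WT (Fin.append f fun j => T i (h j)) s) l
      (𝓝 (blockLimit WT f h s)) := by
  simp only [blockLimit, blockEval_append]
  split_ifs with hmixed
  · exact hcl _ _ (card_pos.mpr hmixed.1) (card_pos.mpr hmixed.2) _ _
  refine tendsto_const_nhds.congr fun i => ?_
  rw [not_and_or, not_nonempty_iff_eq_empty, not_nonempty_iff_eq_empty] at hmixed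
  rcases hmixed with hleft | hright
  · rw [← hT _ i]
    congr 1
    funext k
    induction k using Fin.addCases with
    | left k => exact absurd k.isLt (by simp [hleft])
    | right k => simp only [Fin.append_right]
  · congr 2
    funext k
    exact absurd k.isLt (by simp [hright])

theorem sum_prod_blockLimit {n m : ℕ} (f : Fin n → Sch d N) (h : Fin m → Sch d N) :
    ∑ K : Finpartition (univ : Finset (Fin (n + m))), ∏ s ∈ K.parts, blockLimit WT f h s =
      (∑ P : Finpartition (univ : Finset (Fin n)), ∏ s ∈ P.parts, blockEval WT f s) *
        ∑ Q : Finpartition (univ : Finset (Fin m)), ∏ s ∈ Q.parts, blockEval WT h s := by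
  rw [← map_castAdd_union_map_natAdd,
    Finpartition.sum_prod_union_of_disjoint disjoint_map_castAdd_map_natAdd,
    ← Finpartition.sum_prod_finsetMap, ← Finpartition.sum_prod_finsetMap]
  · congr 1 <;> refine Fintype.sum_congr _ _ fun P => prod_congr rfl fun t _ => ?_
    · have hunmixed : (t.map (Fin.castAddEmb m)).natAddPreimage = ∅ :=
        natAddPreimage_eq_empty_iff.mpr (map_subset_map.mpr (subset_univ t))
      rw [blockLimit, if_neg fun hmixed => hmixed.2.ne_empty hunmixed,
        blockEval_map WT _ (Fin.strictMono_castAdd m)]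
      congr 1
      funext i
      exact Fin.append_left f h i
    · have hunmixed : (t.map (Fin.natAddEmb n)).castAddPreimage = ∅ :=
        castAddPreimage_eq_empty_iff.mpr (map_subset_map.mpr (subset_univ t))
      rw [blockLimit, if_neg fun hmixed => hmixed.1.ne_empty hunmixed,
        blockEval_map WT _ (Fin.strictMono_natAdd n)]
      congr 1
      funext j
      exact Fin.append_right f h j
  · intro t htu htv
    rw [blockLimit, if_pos ⟨nonempty_iff_ne_empty.mpr (mt castAddPreimage_eq_empty_iff.mp htv),
      nonempty_iff_ne_empty.mpr (mt natAddPreimage_eq_empty_iff.mp htu)⟩]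

end BlockEval

namespace TruncationRelation

variable {W WT : (k : ℕ) → ContinuousMultilinearMap ℂ (fun _ : Fin k => Sch d N) ℂ}

theorem eq_sum_prod (hrel : TruncationRelation W WT) (hW0 : W 0 (fun i => i.elim0) = 1)
    (k : ℕ) (g : Fin k → Sch d N) :
    W k g = ∑ P : Finpartition (univ : Finset (Fin k)), ∏ s ∈ P.parts, blockEval WT g s := by
  rcases k.eq_zero_or_pos with rfl | hk
  · have hparts (P : Finpartition (univ : Finset (Fin 0))) : P.parts = ∅ :=
      P.parts_eq_empty_iff.mpr (by simp)
    have : Subsingleton (Finpartition (univ : Finset (Fin 0))) :=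
      ⟨fun P Q => Finpartition.ext (by rw [hparts P, hparts Q])⟩
    rw [Subsingleton.elim g (fun i => i.elim0), hW0,
      Fintype.sum_subsingleton _ (Classical.arbitrary _), hparts, prod_empty]
  · exact hrel k hk g

theorem tendsto_append (hrel : TruncationRelation W WT) (hW0 : W 0 (fun i => i.elim0) = 1)
    {ι : Type*} {l : Filter ι} (T : ι → Sch d N → Sch d N)
    (hT : ∀ k i (g : Fin k → Sch d N), WT k (fun j => T i (g j)) = WT k g)
    (hcl : ∀ p q, 1 ≤ p → 1 ≤ q → ∀ (F : Fin p → Sch d N) (H : Fin q → Sch d N),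
      Tendsto (fun i => WT (p + q) (Fin.append F fun j => T i (H j))) l (𝓝 0))
    {n m : ℕ} (f : Fin n → Sch d N) (h : Fin m → Sch d N) :
    Tendsto (fun i => W (n + m) (Fin.append f fun j => T i (h j))) l (𝓝 (W n f * W m h)) := by
  simp only [hrel.eq_sum_prod hW0, ← sum_prod_blockLimit]
  exact tendsto_finsetSum _ fun K _ => tendsto_finsetProd _ fun s _ =>
    tendsto_blockEval_append WT T hT hcl f h s

end TruncationRelation

theorem cluster_property_of_truncated_clustering
    (τ : EuclideanSpace ℝ (Fin d) → Sch d N → Sch d N)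
    (W WT : (k : ℕ) → ContinuousMultilinearMap ℂ (fun _ : Fin k => Sch d N) ℂ)
    (hW0 : W 0 (fun i => i.elim0) = 1)
    (hrel : TruncationRelation W WT)
    (hinv : ∀ (n : ℕ) (b : EuclideanSpace ℝ (Fin d)) (f : Fin n → Sch d N),
      WT n (fun j => τ b (f j)) = WT n f)
    (a : EuclideanSpace ℝ (Fin d))
    (hcluster : ∀ (n m : ℕ), 1 ≤ n → 1 ≤ m →
      ∀ (f : Fin n → Sch d N) (h : Fin m → Sch d N),
        Filter.Tendsto
          (fun t : ℝ => WT (n + m) (Fin.append f (fun j => τ (t • a) (h j))))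
          Filter.atTop (𝓝 0)) :
    ∀ (n m : ℕ) (f : Fin n → Sch d N) (h : Fin m → Sch d N),
      Filter.Tendsto
        (fun t : ℝ => W (n + m) (Fin.append f (fun j => τ (t • a) (h j))))
        Filter.atTop (𝓝 (W n f * W m h)) :=
  fun _ _ f h =>
    hrel.tendsto_append hW0 (fun t => τ (t • a)) (fun k t => hinv k (t • a)) hcluster f h
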